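/- The class of strongly semisimple Hopf algebras is closed under Drinfeld twists: if H is a strongly semisimple Hopf algebra over a commutative ring R and J is a Drinfeld twist for H, then the twisted Hopf algebra H^J is strongly semisimple. -/

import Mathlib

open TensorProduct

noncomputable section

/-! ### Integrals in a Hopf algebra -/

/-- `t` is a left integral in `H`: `h * t = ε(h) • t` for all `h ∈ H`. -/
def IsLeftIntegral (R : Type*) {H : Type*} [CommRing R] [Ring H] [HopfAlgebra R H]
    (t : H) : Prop :=
  ∀ h : H, h * t = Coalgebra.counit (R := R) h • t

/-- `t` is a right integral in `H`: `t * h = ε(h) • t` for all `h ∈ H`. -/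
def IsRightIntegral (R : Type*) {H : Type*} [CommRing R] [Ring H] [HopfAlgebra R H]
    (t : H) : Prop :=
  ∀ h : H, t * h = Coalgebra.counit (R := R) h • t

/-! ### Module algebras -/

variable (R H A : Type*)

/-- Given an `H`-action `ρ` on `A` (an `R`-algebra map `H → End_R A`),
`pairAction ρ w` is the operator on `A ⊗ A` given, for `w = Σ x ⊗ y`, by
`a ⊗ b ↦ Σ (x • a) ⊗ (y • b)`. -/
def pairAction [CommRing R] [Ring H] [HopfAlgebra R H] [Ring A] [Algebra R A]
    (ρ : H →ₐ[R] Module.End R A) :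
    H ⊗[R] H →ₗ[R] A ⊗[R] A →ₗ[R] A ⊗[R] A :=
  (TensorProduct.homTensorHomMap (RingHom.id R) A A A A) ∘ₗ
    (TensorProduct.map ρ.toLinearMap ρ.toLinearMap)

/-- A left `H`-module algebra structure on an `R`-algebra `A`: an `H`-module structure
(an `R`-algebra map `ρ : H → End_R A`) such that multiplication and unit of `A` are
morphisms of `H`-modules, i.e. `h • (a b) = Σ_(h) (h₁ • a)(h₂ • b)` and `h • 1 = ε(h) 1`;
in other words, `A` is an `R`-algebra in the category of left `H`-modules. -/
structure ModuleAlgebra [CommRing R] [Ring H] [HopfAlgebra R H] [Ring A] [Algebra R A] where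
  ρ : H →ₐ[R] Module.End R A
  act_mul : ∀ (h : H) (a b : A),
    ρ h (a * b) = LinearMap.mul' R A (pairAction R H A ρ (Coalgebra.comul h) (a ⊗ₜ[R] b))
  act_one : ∀ h : H, ρ h 1 = algebraMap R A (Coalgebra.counit h)

variable {R H A}

/-- The set of `H`-invariant elements `A^H = {a | h • a = ε(h) a}` of a module algebra. -/
def ModuleAlgebra.invariants [CommRing R] [Ring H] [HopfAlgebra R H] [Ring A] [Algebra R A]
    (ma : ModuleAlgebra R H A) : Set A :=
  {a : A | ∀ h : H, ma.ρ h a = Coalgebra.counit (R := R) h • a}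

/-- The set of central `H`-invariant elements `Z(A)^H` of a module algebra. -/
def ModuleAlgebra.centralInvariants [CommRing R] [Ring H] [HopfAlgebra R H] [Ring A]
    [Algebra R A] (ma : ModuleAlgebra R H A) : Set A :=
  {a : A | (∀ b : A, a * b = b * a) ∧ ∀ h : H, ma.ρ h a = Coalgebra.counit (R := R) h • a}

/-- A subset `I ⊆ A` is `H`-stable if it is closed under the `H`-action. -/
def IsHStable [CommRing R] [Ring H] [HopfAlgebra R H] [Ring A] [Algebra R A]
    (ma : ModuleAlgebra R H A) (I : Set A) : Prop :=
  ∀ h : H, ∀ x ∈ I, ma.ρ h x ∈ I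

variable (R H A)

/-- `B` realises the smash product `A # H` of a left `H`-module algebra `A` with `H`:
`B` contains `A` and `H` as subalgebras, the multiplication map `A ⊗_R H → B`,
`a ⊗ h ↦ a·h` is an `R`-module isomorphism (so `B = A ⊗_R H` as `R`-module), and
`(1 # h)(a # 1) = Σ_(h) (h₁ • a) # h₂` holds, which forces the smash product
multiplication `(a # h)(b # g) = Σ_(h) a (h₁ • b) # h₂ g`. -/
structure SmashProductStructure [CommRing R] [Ring H] [HopfAlgebra R H] [Ring A] [Algebra R A]
    (ma : ModuleAlgebra R H A) (B : Type*) [Ring B] [Algebra R B] where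
  ιA : A →ₐ[R] B
  ιH : H →ₐ[R] B
  mul_bij : Function.Bijective
    ((LinearMap.mul' R B) ∘ₗ (TensorProduct.map ιA.toLinearMap ιH.toLinearMap))
  commute_rel : ∀ (h : H) (a : A),
    ιH h * ιA a =
      LinearMap.mul' R B
        ((TensorProduct.map (ιA.toLinearMap ∘ₗ ((LinearMap.flip ma.ρ.toLinearMap) a))
          ιH.toLinearMap) (Coalgebra.comul h))

variable {R H A}

/-! ### Ideals and semiprimeness -/

/-- The ordered product `a₁ ⋯ aₙ` of a nonempty family of ring elements,
relative to a multiplication `μ`. -/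
def nProd {A : Type*} (μ : A → A → A) : A → List A → A
  | a, [] => a
  | a, b :: l => μ a (nProd μ b l)

/-- `I` is a two-sided ideal of `A` (described as a set). -/
def IsIdealSet (A : Type*) [Ring A] (I : Set A) : Prop :=
  (0 : A) ∈ I ∧ (∀ x ∈ I, ∀ y ∈ I, x + y ∈ I) ∧
    ∀ a : A, ∀ x ∈ I, a * x ∈ I ∧ x * a ∈ I

/-- `I` is a two-sided ideal with respect to a (possibly twisted) multiplication `μ`. -/
def IsIdealSetMul {A : Type*} [Ring A] (μ : A → A → A) (I : Set A) : Prop :=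
  (0 : A) ∈ I ∧ (∀ x ∈ I, ∀ y ∈ I, x + y ∈ I) ∧
    ∀ a : A, ∀ x ∈ I, μ a x ∈ I ∧ μ x a ∈ I

/-- `I` is a nilpotent ideal with respect to the multiplication `μ`: some power `Iⁿ`
vanishes, i.e. all products of `n + 1` elements of `I` are zero. -/
def IsNilpotentMulSet {A : Type*} [Zero A] (μ : A → A → A) (I : Set A) : Prop :=
  ∃ n : ℕ, ∀ f : Fin (n + 1) → A, (∀ i, f i ∈ I) →
    nProd μ (f 0) (List.ofFn fun i : Fin n => f i.succ) = 0

/-- A ring is semiprime if it has no nonzero nilpotent two-sided ideal. -/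
def RingIsSemiprime (A : Type*) [Ring A] : Prop :=
  ∀ I : Set A, IsIdealSet A I → IsNilpotentMulSet (· * ·) I → I ⊆ {0}

/-- A module algebra is `H`-semiprime if it has no nonzero nilpotent `H`-stable
two-sided ideal. -/
def IsHSemiprime [CommRing R] [Ring H] [HopfAlgebra R H] [Ring A] [Algebra R A]
    (ma : ModuleAlgebra R H A) : Prop :=
  ∀ I : Set A, IsIdealSet A I → IsHStable ma I → IsNilpotentMulSet (· * ·) I → I ⊆ {0}

/-! ### Drinfeld twists, triangularity, cosemisimplicity, strong semisimplicity -/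

variable (R H : Type*)

/-- `J ∈ H ⊗ H` is a Drinfeld twist for `H`: it is invertible and satisfies
`(J ⊗ 1)(Δ ⊗ 1)(J) = (1 ⊗ J)(1 ⊗ Δ)(J)` and `(ε ⊗ 1)(J) = 1 = (1 ⊗ ε)(J)`. -/
def IsDrinfeldTwist [CommRing R] [Ring H] [HopfAlgebra R H] (J : H ⊗[R] H) : Prop :=
  IsUnit J ∧
  ((Algebra.TensorProduct.includeLeft (R := R) (S := R) (A := H ⊗[R] H) (B := H)) J) *
      (LinearMap.rTensor H (Coalgebra.comul (R := R)) J) =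
    ((Algebra.TensorProduct.assoc R R R H H H).symm
        ((Algebra.TensorProduct.includeRight (R := R) (A := H) (B := H ⊗[R] H)) J)) *
      ((Algebra.TensorProduct.assoc R R R H H H).symm
        (LinearMap.lTensor H (Coalgebra.comul (R := R)) J)) ∧
  TensorProduct.lid R H (LinearMap.rTensor H (Coalgebra.counit (R := R)) J) = 1 ∧
  TensorProduct.rid R H (LinearMap.lTensor H (Coalgebra.counit (R := R)) J) = 1

/-- `r ∈ H ⊗ H` is a triangular structure on `H`: an invertible element with
`(Δ ⊗ 1)(r) = r₁₃ r₂₃`, `(1 ⊗ Δ)(r) = r₁₃ r₁₂`, `Δ^cop = r Δ r⁻¹` and `r⁻¹ = τ(r)`. -/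
def IsTriangularStructure [CommRing R] [Ring H] [HopfAlgebra R H] (r : H ⊗[R] H) : Prop :=
  IsUnit r ∧
  LinearMap.rTensor H (Coalgebra.comul (R := R)) r =
    ((TensorProduct.map (Algebra.TensorProduct.includeLeft
        (R := R) (S := R) (A := H) (B := H)).toLinearMap LinearMap.id) r) *
      ((TensorProduct.map (Algebra.TensorProduct.includeRight
        (R := R) (A := H) (B := H)).toLinearMap LinearMap.id) r) ∧
  (TensorProduct.assoc R H H H).symm (LinearMap.lTensor H (Coalgebra.comul (R := R)) r) =
    ((TensorProduct.map (Algebra.TensorProduct.includeLeft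
        (R := R) (S := R) (A := H) (B := H)).toLinearMap LinearMap.id) r) *
      ((Algebra.TensorProduct.includeLeft (R := R) (S := R) (A := H ⊗[R] H) (B := H)) r) ∧
  (∀ h : H, (TensorProduct.comm R H H) (Coalgebra.comul (R := R) h) * r =
      r * Coalgebra.comul (R := R) h) ∧
  (TensorProduct.comm R H H r) * r = 1 ∧ r * (TensorProduct.comm R H H r) = 1

/-- A Hopf algebra over a field is cosemisimple (its dual coalgebra structure is
cosemisimple) iff it admits a normalized (left or right) integral `λ : H → k` on `H`. -/
def IsCosemisimpleHopf (k H : Type*) [Field k] [Ring H] [HopfAlgebra k H] : Prop :=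
  ∃ lam : H →ₗ[k] k, lam 1 = 1 ∧
    ((∀ h : H, TensorProduct.lid k H (LinearMap.rTensor H lam (Coalgebra.comul (R := k) h)) =
        lam h • (1 : H)) ∨
     (∀ h : H, TensorProduct.rid k H (LinearMap.lTensor H lam (Coalgebra.comul (R := k) h)) =
        lam h • (1 : H)))

universe ua ub

/-- A Hopf algebra `H` is strongly semisimple if for every `H`-semiprime left
`H`-module algebra `A` the smash product `A # H` is semiprime. -/
def StronglySemisimple [CommRing R] [Ring H] [HopfAlgebra R H] : Prop :=
  ∀ (A : Type ua) [Ring A] [Algebra R A] (ma : ModuleAlgebra R H A), IsHSemiprime ma →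
    ∀ (B : Type ub) [Ring B] [Algebra R B],
      SmashProductStructure R H A ma B → RingIsSemiprime B

variable {R H}

/-!
Let `A` be an `H^J`-module algebra and `B = A # H^J`. Twisting the product of `A` by `J`,
`a ·_J b = Σ (J¹ • a) (J² • b)`, gives an `H`-module algebra `A_J`, and `a ↦ Σ (J¹ • a) # J²`
is an embedding `A_J → B`, multiplicative by the cocycle condition, which identifies `B` with
`A_J # H`. Since `a b = Σ ((J⁻¹)¹ • a) ·_J ((J⁻¹)² • b)`, every `H`-stable ideal of `A_J` is
an ideal of `A`, and it is nilpotent in `A` if it is nilpotent in `A_J`. So `A_J` is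
`H`-semiprime, and `B ≅ A_J # H` is semiprime because `H` is strongly semisimple.
-/

open LinearMap

section PairAction

variable {R H A : Type*} [CommRing R] [Ring H] [HopfAlgebra R H] [Ring A] [Algebra R A]
  (ρ : H →ₐ[R] Module.End R A)

theorem pairAction_eq_endTensorEndAlgHom :
    pairAction R H A ρ =
      (Module.endTensorEndAlgHom.comp (Algebra.TensorProduct.map ρ ρ)).toLinearMap := by
  ext; rfl

theorem pairAction_tmul (u v : H) :
    pairAction R H A ρ (u ⊗ₜ[R] v) = TensorProduct.map (ρ u) (ρ v) := rfl

theorem pairAction_one : pairAction R H A ρ 1 = 1 := by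
  rw [pairAction_eq_endTensorEndAlgHom, AlgHom.toLinearMap_apply, map_one]

theorem pairAction_mul (X Y : H ⊗[R] H) :
    pairAction R H A ρ (X * Y) = pairAction R H A ρ X * pairAction R H A ρ Y := by
  simp only [pairAction_eq_endTensorEndAlgHom, AlgHom.toLinearMap_apply, map_mul]

theorem pairAction_map {H' : Type*} [Ring H'] [HopfAlgebra R H'] (ρ' : H' →ₐ[R] Module.End R A)
    (φ : H ≃ₐ[R] H') (X : H ⊗[R] H) :
    pairAction R H' A ρ' (TensorProduct.map φ.toLinearMap φ.toLinearMap X) =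
      pairAction R H A (ρ'.comp φ.toAlgHom) X := by
  induction X using TensorProduct.induction_on with
  | zero => simp
  | tmul u v => rfl
  | add X Y hX hY => simp only [map_add, hX, hY]

theorem map_pairAction_mem_map₂ {P : Type*} [AddCommMonoid P] [Module R P]
    (f : A ⊗[R] A →ₗ[R] P) {M N : Submodule R A}
    (hM : ∀ h, M ≤ M.comap (ρ h)) (hN : ∀ h, N ≤ N.comap (ρ h))
    (X : H ⊗[R] H) {x y : A} (hx : x ∈ M) (hy : y ∈ N) :
    f (pairAction R H A ρ X (x ⊗ₜ[R] y)) ∈ Submodule.map₂ (TensorProduct.curry f) M N := by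
  induction X using TensorProduct.induction_on with
  | zero => simp
  | tmul u v => exact Submodule.apply_mem_map₂ _ (hM u hx) (hN v hy)
  | add X Y hX hY => simpa only [map_add, LinearMap.add_apply] using add_mem hX hY

def pairProduct (a b : A) : H ⊗[R] H →ₗ[R] A :=
  LinearMap.mul' R A ∘ₗ LinearMap.applyₗ (a ⊗ₜ[R] b) ∘ₗ pairAction R H A ρ

theorem pairProduct_apply (a b : A) (X : H ⊗[R] H) :
    pairProduct ρ a b X = LinearMap.mul' R A (pairAction R H A ρ X (a ⊗ₜ[R] b)) := rfl

end PairAction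

section ActLmul

variable {R H A : Type*} [CommSemiring R] [Semiring H] [Algebra R H] [AddCommMonoid A]
  [Module R A] (ρ : H →ₐ[R] Module.End R A)

def actLmul : H ⊗[R] H →ₐ[R] Module.End R (A ⊗[R] H) :=
  Module.endTensorEndAlgHom.comp (Algebra.TensorProduct.map ρ (Algebra.lmul R H))

theorem actLmul_tmul_tmul (u v : H) (a : A) (g : H) :
    actLmul ρ (u ⊗ₜ[R] v) (a ⊗ₜ[R] g) = ρ u a ⊗ₜ[R] (v * g) := rfl

theorem actLmul_mul_apply (X Y : H ⊗[R] H) (z : A ⊗[R] H) :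
    actLmul ρ X (actLmul ρ Y z) = actLmul ρ (X * Y) z := by
  rw [map_mul, Module.End.mul_apply]

theorem actLmul_bijective {X : H ⊗[R] H} (hX : IsUnit X) : Function.Bijective (actLmul ρ X) :=
  (Module.End.isUnit_iff _).1 (hX.map (actLmul ρ))

end ActLmul

section TensorAlgebra

variable {R H M : Type*} [CommSemiring R] [Semiring H] [Algebra R H]
  [AddCommMonoid M] [Module R M]

theorem Algebra.TensorProduct.includeLeft_mul_rTensor (Y : H ⊗[R] H) (f : M →ₗ[R] H ⊗[R] H)
    (X : M ⊗[R] H) :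
    Algebra.TensorProduct.includeLeft (R := R) (S := R) (B := H) Y * LinearMap.rTensor H f X =
      LinearMap.rTensor H (LinearMap.mulLeft R Y ∘ₗ f) X := by
  induction X using TensorProduct.induction_on with
  | zero => simp
  | tmul m h => simp
  | add X Z hX hZ => rw [map_add, mul_add, hX, hZ, map_add]

theorem Algebra.TensorProduct.includeRight_mul_lTensor (Y : H ⊗[R] H) (f : M →ₗ[R] H ⊗[R] H)
    (X : H ⊗[R] M) :
    Algebra.TensorProduct.includeRight (R := R) (A := H) Y * LinearMap.lTensor H f X =
      LinearMap.lTensor H (LinearMap.mulLeft R Y ∘ₗ f) X := by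
  induction X using TensorProduct.induction_on with
  | zero => simp
  | tmul h m => simp
  | add X Z hX hZ => rw [map_add, mul_add, hX, hZ, map_add]

end TensorAlgebra

theorem tmul_one_injective {R A H : Type*} [CommSemiring R] [AddCommMonoid A] [Module R A]
    [Semiring H] [Bialgebra R H] : Function.Injective fun a : A => a ⊗ₜ[R] (1 : H) :=
  Function.LeftInverse.injective (g := TensorProduct.rid R A ∘ lTensor A Coalgebra.counit)
    fun a => by simp

structure DrinfeldTwist (R H : Type*) [CommRing R] [Ring H] [HopfAlgebra R H] where
  J : H ⊗[R] H
  inv : H ⊗[R] H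
  mul_inv : J * inv = 1
  inv_mul : inv * J = 1
  isDrinfeldTwist : IsDrinfeldTwist R H J

/-- A module algebra over the twisted Hopf algebra `H^J`, with `H^J` identified with `H`
as an algebra. -/
structure TwistedModuleAlgebra {R H : Type*} [CommRing R] [Ring H] [HopfAlgebra R H]
    (T : DrinfeldTwist R H) (A : Type*) [Ring A] [Algebra R A] where
  ρ : H →ₐ[R] Module.End R A
  act_mul : ∀ (h : H) (a b : A), ρ h (a * b) =
    LinearMap.mul' R A (pairAction R H A ρ (T.J * Coalgebra.comul h * T.inv) (a ⊗ₜ[R] b))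
  act_one : ∀ h : H, ρ h 1 = algebraMap R A (Coalgebra.counit h)

namespace TwistedModuleAlgebra

variable {R H A : Type*} [CommRing R] [Ring H] [HopfAlgebra R H] [Ring A] [Algebra R A]
  {T : DrinfeldTwist R H} (ma : TwistedModuleAlgebra T A)

def IsHSemiprime : Prop :=
  ∀ I : Set A, IsIdealSet A I → (∀ h, ∀ x ∈ I, ma.ρ h x ∈ I) →
    IsNilpotentMulSet (· * ·) I → I ⊆ {0}

/-- The multiplication `a ⊗ b ↦ Σ (J¹ • a) (J² • b)`, making `A` an `H`-module algebra. -/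
def twistedMul : A ⊗[R] A →ₗ[R] A := LinearMap.mul' R A ∘ₗ pairAction R H A ma.ρ T.J

theorem mul_eq_twistedMul (a b : A) :
    a * b = ma.twistedMul (pairAction R H A ma.ρ T.inv (a ⊗ₜ[R] b)) := by
  rw [twistedMul, comp_apply, ← Module.End.mul_apply, ← pairAction_mul, T.mul_inv,
    pairAction_one, Module.End.one_apply, mul'_apply]

theorem act_mul' (h : H) (z : A ⊗[R] A) :
    ma.ρ h (LinearMap.mul' R A z) =
      LinearMap.mul' R A (pairAction R H A ma.ρ (T.J * Coalgebra.comul h * T.inv) z) := by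
  induction z using TensorProduct.induction_on with
  | zero => simp
  | tmul a b => rw [mul'_apply, ma.act_mul]
  | add x y hx hy => rw [map_add, map_add, map_add, hx, hy, map_add]

theorem act_twistedMul (h : H) (z : A ⊗[R] A) :
    ma.ρ h (ma.twistedMul z) =
      ma.twistedMul (pairAction R H A ma.ρ (Coalgebra.comul h) z) := by
  simp only [twistedMul, comp_apply, act_mul', ← Module.End.mul_apply, ← pairAction_mul,
    mul_assoc, T.inv_mul, mul_one]

theorem mul_mem_of_twistedMul_mem {M N P : Submodule R A}
    (hM : ∀ h, M ≤ M.comap (ma.ρ h)) (hN : ∀ h, N ≤ N.comap (ma.ρ h))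
    (hMN : ∀ x ∈ M, ∀ y ∈ N, ma.twistedMul (x ⊗ₜ[R] y) ∈ P) {x y : A} (hx : x ∈ M)
    (hy : y ∈ N) : x * y ∈ P := by
  rw [ma.mul_eq_twistedMul]
  exact Submodule.map₂_le.2 hMN (map_pairAction_mem_map₂ ma.ρ _ hM hN T.inv hx hy)

theorem isIdealSet_of_twistedMul (I : Submodule R A) (hI : ∀ h, I ≤ I.comap (ma.ρ h))
    (hmul : ∀ a : A, ∀ x ∈ I, ma.twistedMul (a ⊗ₜ[R] x) ∈ I ∧ ma.twistedMul (x ⊗ₜ[R] a) ∈ I) :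
    IsIdealSet A I := by
  have htop : ∀ h, (⊤ : Submodule R A) ≤ (⊤ : Submodule R A).comap (ma.ρ h) := fun _ => le_top
  refine ⟨I.zero_mem, fun x hx y hy => I.add_mem hx hy, fun a x hx => ⟨?_, ?_⟩⟩
  · exact ma.mul_mem_of_twistedMul_mem htop hI (fun a _ x hx => (hmul a x hx).1) trivial hx
  · exact ma.mul_mem_of_twistedMul_mem hI htop (fun x hx a _ => (hmul a x hx).2) hx trivial

/-- `twistedPow ma I n` is the `(n + 1)`-st power of `span I` for the twisted multiplication. -/
def twistedPow (I : Set A) : ℕ → Submodule R A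
  | 0 => Submodule.span R I
  | n + 1 => Submodule.map₂ (TensorProduct.curry ma.twistedMul) (Submodule.span R I)
      (twistedPow I n)

variable {ma} {I : Set A}

theorem span_le_comap (hI : ∀ h, ∀ x ∈ I, ma.ρ h x ∈ I) (h : H) :
    Submodule.span R I ≤ (Submodule.span R I).comap (ma.ρ h) :=
  Submodule.span_le.2 fun x hx => Submodule.subset_span (hI h x hx)

theorem twistedPow_le_comap (hI : ∀ h, ∀ x ∈ I, ma.ρ h x ∈ I) :
    ∀ n h, ma.twistedPow I n ≤ (ma.twistedPow I n).comap (ma.ρ h)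
  | 0, h => span_le_comap hI h
  | n + 1, h => Submodule.map₂_le.2 fun x hx y hy => by
      rw [Submodule.mem_comap, TensorProduct.curry_apply, act_twistedMul]
      exact map_pairAction_mem_map₂ ma.ρ _ (span_le_comap hI) (twistedPow_le_comap hI n) _
        hx hy

theorem nProd_mem_twistedPow (hI : ∀ h, ∀ x ∈ I, ma.ρ h x ∈ I) :
    ∀ (n : ℕ) (f : Fin (n + 1) → A), (∀ i, f i ∈ I) →
      nProd (· * ·) (f 0) (List.ofFn fun i : Fin n => f i.succ) ∈ ma.twistedPow I n
  | 0, f, hf => Submodule.subset_span (hf 0)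
  | n + 1, f, hf => by
    rw [List.ofFn_succ]
    exact ma.mul_mem_of_twistedMul_mem (span_le_comap hI) (twistedPow_le_comap hI n)
      (fun x hx y hy => Submodule.apply_mem_map₂ _ hx hy) (Submodule.subset_span (hf 0))
      (nProd_mem_twistedPow hI n (fun i => f i.succ) fun i => hf i.succ)

theorem twistedPow_le_span_nProd (n : ℕ) :
    ma.twistedPow I n ≤ Submodule.span R {w | ∃ f : Fin (n + 1) → A, (∀ i, f i ∈ I) ∧
      w = nProd (fun x y => ma.twistedMul (x ⊗ₜ[R] y)) (f 0)
        (List.ofFn fun i : Fin n => f i.succ)} := by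
  induction n with
  | zero =>
    exact Submodule.span_mono fun x hx => ⟨fun _ => x, fun _ => hx, rfl⟩
  | succ n ih =>
    refine (Submodule.map₂_le_map₂_right ih).trans ?_
    rw [Submodule.map₂_span_span]
    refine Submodule.span_mono ?_
    rintro _ ⟨x, hx, _, ⟨f, hf, rfl⟩, rfl⟩
    refine ⟨Fin.cons x f, Fin.cases hx hf, ?_⟩
    simp [List.ofFn_succ, nProd]

theorem isNilpotentMulSet_of_twistedMul (hI : ∀ h, ∀ x ∈ I, ma.ρ h x ∈ I)
    (hnil : IsNilpotentMulSet (fun x y => ma.twistedMul (x ⊗ₜ[R] y)) I) :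
    IsNilpotentMulSet (· * ·) I := by
  obtain ⟨n, hn⟩ := hnil
  refine ⟨n, fun f hf => ?_⟩
  have hmem := twistedPow_le_span_nProd n (nProd_mem_twistedPow hI n f hf)
  rwa [Submodule.span_eq_bot.2 (by rintro _ ⟨g, hg, rfl⟩; exact hn g hg),
    Submodule.mem_bot] at hmem

end TwistedModuleAlgebra

/-- A smash product `A # H^J`, with `H^J` identified with `H` as an algebra. -/
structure TwistedSmashProduct {R H A : Type*} [CommRing R] [Ring H] [HopfAlgebra R H] [Ring A]
    [Algebra R A] {T : DrinfeldTwist R H} (ma : TwistedModuleAlgebra T A) (B : Type*) [Ring B]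
    [Algebra R B] where
  ιA : A →ₐ[R] B
  ιH : H →ₐ[R] B
  mul_bij : Function.Bijective
    ((LinearMap.mul' R B) ∘ₗ (TensorProduct.map ιA.toLinearMap ιH.toLinearMap))
  commute_rel : ∀ (h : H) (a : A), ιH h * ιA a =
    LinearMap.mul' R B ((TensorProduct.map (ιA.toLinearMap ∘ₗ ma.ρ.toLinearMap.flip a)
      ιH.toLinearMap) (T.J * Coalgebra.comul h * T.inv))

namespace TwistedSmashProduct

variable {R H A B : Type*} [CommRing R] [Ring H] [HopfAlgebra R H] [Ring A] [Algebra R A]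
  [Ring B] [Algebra R B] {T : DrinfeldTwist R H} {ma : TwistedModuleAlgebra T A}
  (D : TwistedSmashProduct ma B)

def mulMap : A ⊗[R] H →ₗ[R] B :=
  LinearMap.mul' R B ∘ₗ TensorProduct.map D.ιA.toLinearMap D.ιH.toLinearMap

@[simp]
theorem mulMap_tmul (a : A) (h : H) : D.mulMap (a ⊗ₜ[R] h) = D.ιA a * D.ιH h := rfl

theorem ιA_mul_mulMap (a : A) (x : A ⊗[R] H) :
    D.ιA a * D.mulMap x = D.mulMap (rTensor H (LinearMap.mul R A a) x) := by
  induction x using TensorProduct.induction_on with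
  | zero => simp
  | tmul b h => simp [mul_assoc]
  | add x y hx hy => rw [map_add, mul_add, hx, hy, map_add, map_add]

theorem mulMap_actLmul_tmul (W : H ⊗[R] H) (a : A) (g : H) :
    D.mulMap (actLmul ma.ρ W (a ⊗ₜ[R] g)) = LinearMap.mul' R B
      ((TensorProduct.map (D.ιA.toLinearMap ∘ₗ ma.ρ.toLinearMap.flip a) D.ιH.toLinearMap) W) *
        D.ιH g := by
  induction W using TensorProduct.induction_on with
  | zero => simp
  | tmul u v => simp [actLmul_tmul_tmul, mul_assoc]
  | add X Y hX hY => simp only [map_add, LinearMap.add_apply, add_mul, hX, hY]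

theorem ιH_mul_mulMap (h : H) (x : A ⊗[R] H) :
    D.ιH h * D.mulMap x = D.mulMap (actLmul ma.ρ (T.J * Coalgebra.comul h * T.inv) x) := by
  induction x using TensorProduct.induction_on with
  | zero => simp
  | tmul a g => rw [mulMap_actLmul_tmul, ← D.commute_rel, mulMap_tmul, mul_assoc]
  | add x y hx hy => rw [map_add, mul_add, hx, hy, map_add, map_add]

/-- The embedding `a ↦ Σ ιA (J¹ • a) ιH J²` of the twisted algebra `A_J` into `B`. -/
def embedding : A →ₗ[R] B :=
  D.mulMap ∘ₗ actLmul ma.ρ T.J ∘ₗ (TensorProduct.mk R A H).flip 1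

theorem embedding_apply (a : A) :
    D.embedding a = D.mulMap (actLmul ma.ρ T.J (a ⊗ₜ[R] 1)) := rfl

theorem embedding_mul_ιH (a : A) (g : H) :
    D.embedding a * D.ιH g = D.mulMap (actLmul ma.ρ T.J (a ⊗ₜ[R] g)) := by
  rw [embedding_apply, mulMap_actLmul_tmul, mulMap_actLmul_tmul, map_one, mul_one]

theorem ιH_mul_embedding (h : H) (a : A) :
    D.ιH h * D.embedding a =
      D.mulMap (actLmul ma.ρ (T.J * Coalgebra.comul h) (a ⊗ₜ[R] 1)) := by
  rw [embedding_apply, ιH_mul_mulMap, actLmul_mul_apply, mul_assoc _ T.inv, T.inv_mul,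
    mul_one]

theorem commute_rel_embedding (h : H) (a : A) :
    D.ιH h * D.embedding a = LinearMap.mul' R B ((TensorProduct.map
      (D.embedding ∘ₗ ma.ρ.toLinearMap.flip a) D.ιH.toLinearMap) (Coalgebra.comul h)) := by
  have hW : ∀ W : H ⊗[R] H, LinearMap.mul' R B ((TensorProduct.map
      (D.embedding ∘ₗ ma.ρ.toLinearMap.flip a) D.ιH.toLinearMap) W) =
        D.mulMap (actLmul ma.ρ T.J (actLmul ma.ρ W (a ⊗ₜ[R] 1))) := by
    intro W
    induction W using TensorProduct.induction_on with
    | zero => simp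
    | tmul u v =>
      simp only [TensorProduct.map_tmul, mul'_apply, comp_apply, actLmul_tmul_tmul, mul_one]
      exact D.embedding_mul_ιH _ v
    | add X Y hX hY => simp only [map_add, LinearMap.add_apply, hX, hY]
  rw [hW, actLmul_mul_apply, ιH_mul_embedding]

theorem rTensor_mul_actLmul (u : H) (a b : A) (Y : H ⊗[R] H) :
    rTensor H (LinearMap.mul R A (ma.ρ u a)) (actLmul ma.ρ Y (b ⊗ₜ[R] 1)) =
      rTensor H (pairProduct ma.ρ a b) ((Algebra.TensorProduct.assoc R R R H H H).symm
        (u ⊗ₜ[R] Y)) := by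
  induction Y using TensorProduct.induction_on with
  | zero => simp
  | tmul v w => simp [actLmul_tmul_tmul, pairProduct_apply, pairAction_tmul]
  | add X Y hX hY => simp only [map_add, LinearMap.add_apply, TensorProduct.tmul_add, hX, hY]

theorem mulMap_actLmul_mul_embedding (a b : A) (X : H ⊗[R] H) :
    D.mulMap (actLmul ma.ρ X (a ⊗ₜ[R] 1)) * D.embedding b =
      D.mulMap (rTensor H (pairProduct ma.ρ a b) ((Algebra.TensorProduct.assoc R R R H H H).symm
        (lTensor H (LinearMap.mulLeft R T.J ∘ₗ Coalgebra.comul) X))) := by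
  induction X using TensorProduct.induction_on with
  | zero => simp
  | tmul u v =>
    rw [actLmul_tmul_tmul, mul_one, mulMap_tmul, mul_assoc, ιH_mul_embedding, ιA_mul_mulMap,
      rTensor_mul_actLmul, lTensor_tmul, comp_apply, mulLeft_apply]
  | add X Y hX hY => simp only [map_add, LinearMap.add_apply, add_mul, hX, hY]

theorem actLmul_twistedMul_tmul_one (a b : A) (X : H ⊗[R] H) :
    actLmul ma.ρ X (ma.twistedMul (a ⊗ₜ[R] b) ⊗ₜ[R] 1) = rTensor H (pairProduct ma.ρ a b)
      (rTensor H (LinearMap.mulLeft R T.J ∘ₗ Coalgebra.comul) X) := by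
  induction X using TensorProduct.induction_on with
  | zero => simp
  | tmul u v =>
    rw [actLmul_tmul_tmul, ma.act_twistedMul, mul_one, rTensor_tmul, rTensor_tmul, comp_apply,
      mulLeft_apply, pairProduct_apply, pairAction_mul, Module.End.mul_apply]
    rfl
  | add X Y hX hY => simp only [map_add, LinearMap.add_apply, hX, hY]

theorem embedding_twistedMul (a b : A) :
    D.embedding (ma.twistedMul (a ⊗ₜ[R] b)) = D.embedding a * D.embedding b := by
  obtain ⟨-, hcocycle, -, -⟩ := T.isDrinfeldTwist
  rw [embedding_apply, actLmul_twistedMul_tmul_one,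
    ← Algebra.TensorProduct.includeLeft_mul_rTensor, hcocycle, ← map_mul,
    Algebra.TensorProduct.includeRight_mul_lTensor, ← mulMap_actLmul_mul_embedding]
  rfl

theorem embedding_one : D.embedding 1 = 1 := by
  obtain ⟨-, -, hcounit, -⟩ := T.isDrinfeldTwist
  have h1 : ∀ X : H ⊗[R] H, actLmul ma.ρ X ((1 : A) ⊗ₜ[R] (1 : H)) =
      (1 : A) ⊗ₜ[R] TensorProduct.lid R H (rTensor H Coalgebra.counit X) := by
    intro X
    induction X using TensorProduct.induction_on with
    | zero => simp
    | tmul u v =>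
      rw [actLmul_tmul_tmul, ma.act_one, mul_one, rTensor_tmul, TensorProduct.lid_tmul,
        Algebra.algebraMap_eq_smul_one, TensorProduct.smul_tmul]
    | add X Y hX hY => rw [map_add, LinearMap.add_apply, hX, hY, map_add, map_add,
        TensorProduct.tmul_add]
  rw [embedding_apply, h1, hcounit, mulMap_tmul, map_one, map_one, one_mul]

theorem embedding_injective : Function.Injective D.embedding :=
  D.mul_bij.1.comp ((actLmul_bijective ma.ρ T.isDrinfeldTwist.1).1.comp tmul_one_injective)

/-- `A` with the multiplication `ma.twistedMul`. -/
def Twisted (_D : TwistedSmashProduct ma B) : Type _ := A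

instance : AddCommGroup D.Twisted := inferInstanceAs (AddCommGroup A)

instance : Module R D.Twisted := inferInstanceAs (Module R A)

/-- Associativity and unitality of the twisted multiplication come from those of `B`
through the injective multiplicative map `D.embedding`. -/
instance : Ring D.Twisted :=
  { (inferInstance : AddCommGroup D.Twisted) with
    mul := fun a b : A => ma.twistedMul (a ⊗ₜ[R] b)
    one := (1 : A)
    left_distrib := fun a b c : A =>
      show ma.twistedMul (a ⊗ₜ[R] (b + c)) = _ by rw [TensorProduct.tmul_add, map_add]; rfl
    right_distrib := fun a b c : A =>
      show ma.twistedMul ((a + b) ⊗ₜ[R] c) = _ by rw [TensorProduct.add_tmul, map_add]; rfl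
    zero_mul := fun a : A =>
      show ma.twistedMul ((0 : A) ⊗ₜ[R] a) = 0 by rw [TensorProduct.zero_tmul, map_zero]
    mul_zero := fun a : A =>
      show ma.twistedMul (a ⊗ₜ[R] (0 : A)) = 0 by rw [TensorProduct.tmul_zero, map_zero]
    mul_assoc := fun a b c : A => D.embedding_injective <|
      show D.embedding (ma.twistedMul (ma.twistedMul (a ⊗ₜ[R] b) ⊗ₜ[R] c)) =
        D.embedding (ma.twistedMul (a ⊗ₜ[R] ma.twistedMul (b ⊗ₜ[R] c))) by
      simp only [embedding_twistedMul, mul_assoc]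
    one_mul := fun a : A => D.embedding_injective <|
      show D.embedding (ma.twistedMul (1 ⊗ₜ[R] a)) = D.embedding a by
      rw [embedding_twistedMul, embedding_one, one_mul]
    mul_one := fun a : A => D.embedding_injective <|
      show D.embedding (ma.twistedMul (a ⊗ₜ[R] 1)) = D.embedding a by
      rw [embedding_twistedMul, embedding_one, mul_one] }

instance : Algebra R D.Twisted :=
  Algebra.ofModule
    (fun r (a b : A) => by
      change ma.twistedMul ((r • a) ⊗ₜ[R] b) = r • ma.twistedMul (a ⊗ₜ[R] b)
      rw [← TensorProduct.smul_tmul', map_smul])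
    (fun r (a b : A) => by
      change ma.twistedMul (a ⊗ₜ[R] (r • b)) = r • ma.twistedMul (a ⊗ₜ[R] b)
      rw [TensorProduct.tmul_smul, map_smul])

theorem mul'_twisted : LinearMap.mul' R D.Twisted = ma.twistedMul :=
  TensorProduct.ext' fun _ _ => rfl

def moduleAlgebra : ModuleAlgebra R H D.Twisted where
  ρ := ma.ρ
  act_mul h a b := by
    rw [mul'_twisted]
    exact ma.act_twistedMul h (a ⊗ₜ[R] b)
  act_one h := by
    rw [Algebra.algebraMap_eq_smul_one]
    exact (ma.act_one h).trans (Algebra.algebraMap_eq_smul_one _)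

theorem isHSemiprime (hA : ma.IsHSemiprime) : IsHSemiprime D.moduleAlgebra := by
  intro I hI hstab hnil
  let M : Submodule R D.Twisted :=
    { carrier := I
      zero_mem' := hI.1
      add_mem' := fun {x y} hx hy => hI.2.1 x hx y hy
      smul_mem' := fun r x hx => by
        rw [Algebra.smul_def]
        exact (hI.2.2 _ x hx).1 }
  exact hA I (ma.isIdealSet_of_twistedMul M (fun h _ hx => hstab h _ hx) hI.2.2) hstab
    (TwistedModuleAlgebra.isNilpotentMulSet_of_twistedMul hstab hnil)

def embeddingAlgHom : D.Twisted →ₐ[R] B :=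
  AlgHom.ofLinearMap D.embedding D.embedding_one D.embedding_twistedMul

theorem mul'_comp_map_embeddingAlgHom :
    (LinearMap.mul' R B ∘ₗ TensorProduct.map D.embeddingAlgHom.toLinearMap D.ιH.toLinearMap :
      D.Twisted ⊗[R] H →ₗ[R] B) = D.mulMap ∘ₗ actLmul ma.ρ T.J :=
  TensorProduct.ext' fun a g => D.embedding_mul_ιH a g

def smashProductStructure : SmashProductStructure R H D.Twisted D.moduleAlgebra B where
  ιA := D.embeddingAlgHom
  ιH := D.ιH
  mul_bij := by
    rw [mul'_comp_map_embeddingAlgHom]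
    exact D.mul_bij.comp (actLmul_bijective ma.ρ T.isDrinfeldTwist.1)
  commute_rel := D.commute_rel_embedding

end TwistedSmashProduct

section Transport

variable {R H H' A B : Type*} [CommRing R] [Ring H] [HopfAlgebra R H] [Ring H']
  [HopfAlgebra R H'] [Ring A] [Algebra R A] [Ring B] [Algebra R B]
  (T : DrinfeldTwist R H) (φ : H ≃ₐ[R] H')
  (hcomul : ∀ h : H, Coalgebra.comul (R := R) (φ h) =
    TensorProduct.map φ.toLinearMap φ.toLinearMap (T.J * Coalgebra.comul (R := R) h * T.inv))
  (hcounit : ∀ h : H, Coalgebra.counit (R := R) (φ h) = Coalgebra.counit (R := R) h)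

def ModuleAlgebra.toTwisted (ma : ModuleAlgebra R H' A) : TwistedModuleAlgebra T A where
  ρ := ma.ρ.comp φ.toAlgHom
  act_mul h a b := by
    rw [← pairAction_map, ← hcomul]
    exact ma.act_mul (φ h) a b
  act_one h := by
    rw [← hcounit]
    exact ma.act_one (φ h)

theorem IsHSemiprime.toTwisted {ma : ModuleAlgebra R H' A} (hA : IsHSemiprime ma) :
    (ma.toTwisted T φ hcomul hcounit).IsHSemiprime := by
  intro I hI hstab
  refine hA I hI fun h' x hx => ?_
  simpa [ModuleAlgebra.toTwisted] using hstab (φ.symm h') x hx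

def SmashProductStructure.toTwisted {ma : ModuleAlgebra R H' A}
    (sp : SmashProductStructure R H' A ma B) :
    TwistedSmashProduct (ma.toTwisted T φ hcomul hcounit) B where
  ιA := sp.ιA
  ιH := sp.ιH.comp φ.toAlgHom
  mul_bij := by
    have h : LinearMap.mul' R B ∘ₗ
        TensorProduct.map sp.ιA.toLinearMap (sp.ιH.comp φ.toAlgHom).toLinearMap =
          (LinearMap.mul' R B ∘ₗ TensorProduct.map sp.ιA.toLinearMap sp.ιH.toLinearMap) ∘ₗ
            (TensorProduct.congr (LinearEquiv.refl R A) φ.toLinearEquiv).toLinearMap :=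
      TensorProduct.ext' fun _ _ => rfl
    rw [h, coe_comp]
    exact sp.mul_bij.comp (LinearEquiv.bijective _)
  commute_rel h a := by
    refine (sp.commute_rel (φ h) a).trans ?_
    rw [hcomul, TensorProduct.map_map]
    rfl

end Transport

/-- The class of strongly semisimple Hopf algebras is closed under
Drinfeld twists: if `H` is strongly semisimple and `J` is a Drinfeld twist for `H`,
then the twisted Hopf algebra `H^J` — here axiomatised as any Hopf algebra `H'` which
coincides with `H` as an algebra (via an algebra isomorphism `φ`), has the same counit,
and has comultiplication `Δ^J = J Δ J⁻¹` — is strongly semisimple. -/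
theorem strongly_semisimple_closed_under_drinfeld_twist
    {R H H' : Type*} [CommRing R] [Ring H] [HopfAlgebra R H] [Ring H']
    [HopfAlgebra R H']
    (J Qinv : H ⊗[R] H) (hJ : IsDrinfeldTwist R H J)
    (hJQ : J * Qinv = 1) (hQJ : Qinv * J = 1)
    (φ : H ≃ₐ[R] H')
    (hcomul : ∀ h : H, Coalgebra.comul (R := R) (φ h) =
      (TensorProduct.map φ.toLinearMap φ.toLinearMap)
        (J * Coalgebra.comul (R := R) h * Qinv))
    (hcounit : ∀ h : H, Coalgebra.counit (R := R) (φ h) = Coalgebra.counit (R := R) h)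
    (hH : StronglySemisimple.{ua, ub} R H) :
    StronglySemisimple.{ua, ub} R H' := by
  intro A _ _ ma hA B _ _ sp
  let T : DrinfeldTwist R H := ⟨J, Qinv, hJQ, hQJ, hJ⟩
  let D := sp.toTwisted T φ hcomul hcounit
  exact hH D.Twisted D.moduleAlgebra (D.isHSemiprime (hA.toTwisted T φ hcomul hcounit)) B
    D.smashProductStructure

end
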